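/- Let n ≥ 1, let α, β satisfy 0 ≤ α < 1/(n+1) and 0 ≤ β < 1/(n+1), and let Φ ∈ COMFORT(Δ_n) be such that Φ restricts to a homeomorphism of ♣_{n,α} onto ♣_{n,β}. Then for every x ∈ Δ_n and every index i ∈ {0,…,n}: x_i = α if and only if Φ(x)_i = β. -/

import Mathlib

/-!
Off the α-cross, the simplex splits into convex chambers, on each of which a fixed set `A` of
coordinates lies below `α` and the others above it. As `Φ` is continuous and maps the complement
of `♣_{n,α}` onto that of `♣_{n,β}`, the intermediate value theorem makes the set of coordinates of
`Φ y` below `β` constant on each chamber. At the barycenter of the face spanned by the coordinates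
outside `A`, order preservation leaves `Φ` only two coordinate values: the larger is at least
`1/(n+1) > β`, and the smaller lies below `β`, since otherwise the case `A = ∅` for the map `Φ⁻¹`,
again in COMFORT, would put all coordinates of the barycenter above `α`. So `Φ` maps the `α`-chamber of `A` into the
`β`-chamber of `A`.

A point with `x i = α` is a limit of points of the chamber of `A = {j | x j < α}`, with `i ∉ A`,
hence `β ≤ Φ x i`. Conversely `Φ x` lies on the `β`-cross, say `Φ x j = β`; the same bound for
`Φ⁻¹` gives `α ≤ x j`, so `Φ x i ≤ Φ x j = β` by order preservation.
-/

open scoped BigOperators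

noncomputable section

/-- `Spx k` is the standard simplex on `k` coordinates, i.e. the standard simplex
`Δ_{k-1}` of the paper, as a subspace of `ℝ^k`. -/
abbrev Spx (k : ℕ) : Type := {x : Fin k → ℝ // x ∈ stdSimplex ℝ (Fin k)}

lemma perm_mem {k : ℕ} (ϑ : Equiv.Perm (Fin k)) {x : Fin k → ℝ}
    (hx : x ∈ stdSimplex ℝ (Fin k)) :
    (fun i => x (ϑ i)) ∈ stdSimplex ℝ (Fin k) :=
  ⟨fun i => hx.1 (ϑ i), (Equiv.sum_comp ϑ x).trans hx.2⟩

/-- membership of `COMFORT (Δ_n)`: a self-homeomorphism of the standard simplex which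
(i) respects coordinate permutations and (ii) keeps the order. -/
structure IsComfort {n : ℕ} (F : Spx (n+1) ≃ₜ Spx (n+1)) : Prop where
  perm : ∀ (ϑ : Equiv.Perm (Fin (n+1))) (x : Spx (n+1)),
      ((F ⟨fun i => x.1 (ϑ i), perm_mem ϑ x.2⟩ : Spx (n+1)) : Fin (n+1) → ℝ)
        = fun i => (F x).1 (ϑ i)
  mono : ∀ (x : Spx (n+1)) (i j : Fin (n+1)), x.1 i ≤ x.1 j → (F x).1 i ≤ (F x).1 j

/-- the `α`-cross `♣_{n,α}` of `Δ_n`. -/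
def cross (n : ℕ) (α : ℝ) : Set (Spx (n+1)) := {x | ∃ j, x.1 j = α}

/-- the boundary `BOU_n = ♣_{n,0}` of `Δ_n`. -/
def bou (n : ℕ) : Set (Spx (n+1)) := cross n 0

/-- the barycenter `Center_n` of `Δ_n`. -/
def center (n : ℕ) : Spx (n+1) :=
  ⟨fun _ => 1/((n:ℝ)+1), by
    constructor
    · intro i
      positivity
    · rw [Finset.sum_const, Finset.card_univ, Fintype.card_fin, nsmul_eq_mul]
      push_cast
      field_simp⟩

/-- the minimal coordinate of a point of `Δ_n`. -/
def minCoord {n : ℕ} (x : Spx (n+1)) : ℝ :=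
  Finset.univ.inf' Finset.univ_nonempty x.1

/-- the `α`-layer `Layer_{n,α}` of `Δ_n`. -/
def layer (n : ℕ) (α : ℝ) : Set (Spx (n+1)) := {x | minCoord x = α}

/-- `Sponge (Δ_n)`: the points of `Δ_n` with pairwise distinct coordinates. -/
def sponge (n : ℕ) : Set (Spx (n+1)) := {x | ∀ i j, x.1 i = x.1 j → i = j}

def chamber {ι : Type*} (α : ℝ) (A : Finset ι) : Set (ι → ℝ) :=
  {y | (∀ j ∈ A, y j < α) ∧ ∀ j ∉ A, α < y j}

section Chamber

variable {ι : Type*} {α : ℝ} {A : Finset ι}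

theorem convex_chamber (α : ℝ) (A : Finset ι) : Convex ℝ (chamber α A) := by
  intro y hy z hz a b ha hb hab
  exact ⟨fun j hj => convex_Iio α (hy.1 j hj) (hz.1 j hj) ha hb hab,
    fun j hj => convex_Ioi α (hy.2 j hj) (hz.2 j hj) ha hb hab⟩

theorem ne_of_mem_chamber {y : ι → ℝ} (hy : y ∈ chamber α A) (j : ι) : y j ≠ α := by
  by_cases hj : j ∈ A
  · exact (hy.1 j hj).ne
  · exact (hy.2 j hj).ne'

theorem openSegment_subset_chamber {x p : ι → ℝ} (hx : ∀ j ∈ A, x j ≤ α)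
    (hx' : ∀ j ∉ A, α ≤ x j) (hp : p ∈ chamber α A) : openSegment ℝ x p ⊆ chamber α A := by
  rintro z ⟨a, b, ha, hb, hab, rfl⟩
  have hα : α = a * α + b * α := by rw [← add_mul, hab, one_mul]
  refine ⟨fun j hj => ?_, fun j hj => ?_⟩ <;>
    simp only [Pi.add_apply, Pi.smul_apply, smul_eq_mul]
  · linarith [mul_le_mul_of_nonneg_left (hx j hj) ha.le, mul_lt_mul_of_pos_left (hp.1 j hj) hb]
  · linarith [mul_le_mul_of_nonneg_left (hx' j hj) ha.le, mul_lt_mul_of_pos_left (hp.2 j hj) hb]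

end Chamber

theorem IsPreconnected.lt_iff_lt_of_forall_ne {X δ : Type*} [TopologicalSpace X] [LinearOrder δ]
    [TopologicalSpace δ] [OrderClosedTopology δ] {S : Set X} (hS : IsPreconnected S) {f : X → δ}
    (hf : ContinuousOn f S) {c : δ}
    (hne : ∀ x ∈ S, f x ≠ c) {a b : X} (ha : a ∈ S) (hb : b ∈ S) : f a < c ↔ f b < c := by
  suffices key : ∀ a ∈ S, ∀ b ∈ S, f a < c → f b < c from ⟨key a ha b hb, key b hb a ha⟩
  intro a ha b hb hlt
  by_contra! hle
  obtain ⟨x, hx, hfx⟩ := hS.intermediate_value ha hb hf ⟨hlt.le, hle⟩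
  exact hne x hx hfx

namespace Spx

variable {k : ℕ}

def permute (ϑ : Equiv.Perm (Fin k)) (x : Spx k) : Spx k := ⟨fun i => x.1 (ϑ i), perm_mem ϑ x.2⟩

theorem permute_swap_of_eq {x : Spx k} {i j : Fin k} (h : x.1 i = x.1 j) :
    x.permute (Equiv.swap i j) = x := by
  refine Subtype.ext (funext fun l => ?_)
  simp only [permute, Equiv.swap_apply_def]
  split_ifs with hi hj
  · rw [hi, h]
  · rw [hj, h]
  · rfl

theorem isPreconnected_preimage_chamber (α : ℝ) (A : Finset (Fin k)) :
    IsPreconnected (Subtype.val ⁻¹' chamber α A : Set (Spx k)) := by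
  rw [← Topology.IsInducing.subtypeVal.isPreconnected_image, Subtype.image_preimage_coe]
  exact ((convex_stdSimplex ℝ _).inter (convex_chamber α A)).isPreconnected

theorem mem_closure_preimage_chamber {α : ℝ} {A : Finset (Fin k)} {x p : Spx k}
    (hx : ∀ j ∈ A, x.1 j ≤ α) (hx' : ∀ j ∉ A, α ≤ x.1 j) (hp : p.1 ∈ chamber α A) :
    x ∈ closure (Subtype.val ⁻¹' chamber α A) := by
  rw [closure_subtype, Subtype.image_preimage_coe]
  refine closure_mono (Set.subset_inter ?_ (openSegment_subset_chamber hx hx' hp))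
    (segment_subset_closure_openSegment (left_mem_segment ℝ x.1 p.1))
  exact (convex_stdSimplex ℝ _).openSegment_subset x.2 p.2

theorem exists_one_div_le_apply {n : ℕ} (x : Spx (n+1)) : ∃ m, 1/((n:ℝ)+1) ≤ x.1 m := by
  obtain ⟨m, -, hm⟩ := Finset.exists_le_of_sum_le (f := fun _ => 1/((n:ℝ)+1)) (g := x.1)
    Finset.univ_nonempty (by simp [x.2.2, mul_inv_cancel₀ (by positivity : (n:ℝ) + 1 ≠ 0)])
  exact ⟨m, hm⟩

theorem exists_mem_chamber {n : ℕ} {α : ℝ} (hα : α < 1/((n:ℝ)+1))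
    {A : Finset (Fin (n+1))} {y : Spx (n+1)} (hy : ∀ j ∈ A, y.1 j < α) :
    ∃ p : Spx (n+1), p.1 ∈ chamber α A ∧
      (∀ j ∈ A, ∀ i, p.1 j ≤ p.1 i) ∧ ∀ j ∉ A, ∀ i, p.1 i ≤ p.1 j := by
  obtain ⟨m, hm⟩ := y.exists_one_div_le_apply
  have hmA : m ∈ Aᶜ := Finset.mem_compl.2 fun h => (hy m h).not_ge (hα.le.trans hm)
  have hcard : (0:ℝ) < Aᶜ.card := by exact_mod_cast Finset.card_pos.2 ⟨m, hmA⟩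
  have hc : 1/((n:ℝ)+1) ≤ (Aᶜ.card : ℝ)⁻¹ := by
    rw [one_div]
    refine inv_anti₀ hcard ?_
    exact_mod_cast (Finset.card_le_univ Aᶜ).trans (Fintype.card_fin _).le
  refine ⟨⟨fun j => if j ∈ Aᶜ then (Aᶜ.card : ℝ)⁻¹ else 0, fun j => ?_, ?_⟩, ⟨?_, ?_⟩, ?_, ?_⟩
  · dsimp only
    split_ifs <;> positivity
  · rw [Finset.sum_ite_mem, Finset.univ_inter, Finset.sum_const, nsmul_eq_mul,
      mul_inv_cancel₀ hcard.ne']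
  · intro j hj
    simp only [Finset.mem_compl, hj, not_true_eq_false, if_false]
    exact (y.2.1 j).trans_lt (hy j hj)
  · intro j hj
    simp only [Finset.mem_compl, hj, not_false_eq_true, if_true]
    exact hα.trans_le hc
  · intro j hj i
    simp only [Finset.mem_compl, hj, not_true_eq_false, if_false]
    split_ifs <;> positivity
  · intro j hj i
    simp only [Finset.mem_compl, hj, not_false_eq_true, if_true]
    split_ifs <;> simp

end Spx

section CrossPreserving

variable {n : ℕ} {α β : ℝ} {Φ : Spx (n+1) ≃ₜ Spx (n+1)}

theorem image_symm_cross_eq (hmap : Φ '' cross n α = cross n β) :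
    Φ.symm '' cross n β = cross n α := by
  rw [← hmap, Φ.image_symm, Φ.preimage_image]

theorem apply_ne_of_mem_chamber (hmap : Φ '' cross n α = cross n β) {A : Finset (Fin (n+1))}
    {y : Spx (n+1)} (hy : y.1 ∈ chamber α A) (j : Fin (n+1)) : (Φ y).1 j ≠ β := by
  intro h
  obtain ⟨k, hk⟩ := Φ.injective.mem_set_image.1 (hmap ▸ ⟨j, h⟩ : Φ y ∈ Φ '' cross n α)
  exact ne_of_mem_chamber hy k hk

theorem apply_lt_iff_of_mem_chamber (hmap : Φ '' cross n α = cross n β)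
    {A : Finset (Fin (n+1))} {y p : Spx (n+1)} (hy : y.1 ∈ chamber α A)
    (hp : p.1 ∈ chamber α A) (j : Fin (n+1)) : (Φ y).1 j < β ↔ (Φ p).1 j < β :=
  (Spx.isPreconnected_preimage_chamber α A).lt_iff_lt_of_forall_ne
    ((continuous_apply j).comp (continuous_subtype_val.comp Φ.continuous)).continuousOn
    (fun _ hz => apply_ne_of_mem_chamber hmap hz j) hy hp

end CrossPreserving

namespace IsComfort

variable {n : ℕ} {α β : ℝ} {Φ : Spx (n+1) ≃ₜ Spx (n+1)}

theorem apply_permute (hΦ : IsComfort Φ) (ϑ : Equiv.Perm (Fin (n+1))) (x : Spx (n+1)) :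
    Φ (x.permute ϑ) = (Φ x).permute ϑ :=
  Subtype.ext (hΦ.perm ϑ x)

theorem eq_of_apply_eq (hΦ : IsComfort Φ) {x : Spx (n+1)} {i j : Fin (n+1)}
    (h : (Φ x).1 i = (Φ x).1 j) : x.1 i = x.1 j := by
  have hx : x.permute (Equiv.swap i j) = x :=
    Φ.injective (by rw [hΦ.apply_permute, Spx.permute_swap_of_eq h])
  simpa [Spx.permute] using (congrFun (congrArg Subtype.val hx) i).symm

protected theorem symm (hΦ : IsComfort Φ) : IsComfort Φ.symm where
  perm ϑ x := congrArg Subtype.val <| show Φ.symm (x.permute ϑ) = (Φ.symm x).permute ϑ from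
    Φ.symm_apply_eq.2 (by rw [hΦ.apply_permute, Φ.apply_symm_apply])
  mono x i j hij := by
    by_contra! hlt
    have hji := hΦ.mono (Φ.symm x) j i hlt.le
    rw [Φ.apply_symm_apply] at hji
    exact hlt.ne' (hΦ.eq_of_apply_eq (by rw [Φ.apply_symm_apply]; exact le_antisymm hij hji))

theorem one_div_le_apply (hΦ : IsComfort Φ) {x : Spx (n+1)} {j : Fin (n+1)}
    (hj : ∀ i, x.1 i ≤ x.1 j) : 1/((n:ℝ)+1) ≤ (Φ x).1 j := by
  obtain ⟨m, hm⟩ := (Φ x).exists_one_div_le_apply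
  exact hm.trans (hΦ.mono x m j (hj m))

theorem lt_apply_of_mem_chamber_of_notMem (hΦ : IsComfort Φ) (hmap : Φ '' cross n α = cross n β)
    (hα : α < 1/((n:ℝ)+1)) (hβ : β < 1/((n:ℝ)+1)) {A : Finset (Fin (n+1))} {y : Spx (n+1)}
    (hy : y.1 ∈ chamber α A) {j : Fin (n+1)} (hj : j ∉ A) : β < (Φ y).1 j := by
  obtain ⟨p, hp, -, hpmax⟩ := Spx.exists_mem_chamber hα hy.1
  have hβp : β < (Φ p).1 j := hβ.trans_le (hΦ.one_div_le_apply (hpmax j hj))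
  refine lt_of_le_of_ne (not_lt.1 fun h => ?_) (apply_ne_of_mem_chamber hmap hy j).symm
  exact hβp.not_gt ((apply_lt_iff_of_mem_chamber hmap hy hp j).1 h)

theorem mapsTo_preimage_chamber (hΦ : IsComfort Φ) (hmap : Φ '' cross n α = cross n β)
    (hα : α < 1/((n:ℝ)+1)) (hβ : β < 1/((n:ℝ)+1)) (A : Finset (Fin (n+1))) :
    Set.MapsTo Φ (Subtype.val ⁻¹' chamber α A) (Subtype.val ⁻¹' chamber β A) := by
  intro y hy
  refine ⟨fun j hj => ?_, fun j hj => hΦ.lt_apply_of_mem_chamber_of_notMem hmap hα hβ hy hj⟩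
  obtain ⟨p, hp, hpmin, -⟩ := Spx.exists_mem_chamber hα hy.1
  refine (apply_lt_iff_of_mem_chamber hmap hy hp j).2 (not_le.1 fun hle => ?_)
  have hβp : β < (Φ p).1 j := lt_of_le_of_ne hle (apply_ne_of_mem_chamber hmap hp j).symm
  have hΦp : (Φ p).1 ∈ chamber β ∅ :=
    ⟨by simp, fun i _ => hβp.trans_le (hΦ.mono p j i (hpmin j hj i))⟩
  have hαp := hΦ.symm.lt_apply_of_mem_chamber_of_notMem (image_symm_cross_eq hmap) hβ hα hΦp
    (Finset.notMem_empty j)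
  rw [Φ.symm_apply_apply] at hαp
  exact (hp.1 j hj).not_gt hαp

theorem le_apply_of_apply_eq (hΦ : IsComfort Φ) (hmap : Φ '' cross n α = cross n β)
    (hα : α < 1/((n:ℝ)+1)) (hβ : β < 1/((n:ℝ)+1)) {x : Spx (n+1)} {i : Fin (n+1)}
    (hxi : x.1 i = α) : β ≤ (Φ x).1 i := by
  set A := Finset.univ.filter fun j => x.1 j < α
  have hA : ∀ j, j ∈ A ↔ x.1 j < α := by simp [A]
  obtain ⟨p, hp, -⟩ := Spx.exists_mem_chamber hα fun j => (hA j).1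
  have hx := Spx.mem_closure_preimage_chamber (fun j hj => ((hA j).1 hj).le)
    (fun j hj => not_lt.1 (hj ∘ (hA j).2)) hp
  have hiA : i ∉ A := fun h => ((hA i).1 h).ne hxi
  have hmaps : Set.MapsTo Φ (Subtype.val ⁻¹' chamber α A) {z | β ≤ z.1 i} :=
    fun y hy => ((hΦ.mapsTo_preimage_chamber hmap hα hβ A hy).2 i hiA).le
  exact hmaps.closure_left Φ.continuous (isClosed_le continuous_const
    ((continuous_apply i).comp continuous_subtype_val)) hx

theorem apply_eq_of_apply_eq (hΦ : IsComfort Φ) (hmap : Φ '' cross n α = cross n β)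
    (hα : α < 1/((n:ℝ)+1)) (hβ : β < 1/((n:ℝ)+1)) {x : Spx (n+1)} {i : Fin (n+1)}
    (hxi : x.1 i = α) : (Φ x).1 i = β := by
  obtain ⟨j, hj⟩ : Φ x ∈ cross n β := hmap ▸ Set.mem_image_of_mem Φ ⟨i, hxi⟩
  have hαj : α ≤ x.1 j := by
    simpa using hΦ.symm.le_apply_of_apply_eq (image_symm_cross_eq hmap) hβ hα hj
  exact le_antisymm (hj ▸ hΦ.mono x i j (hxi ▸ hαj)) (hΦ.le_apply_of_apply_eq hmap hα hβ hxi)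

end IsComfort

theorem comfort_cross_component_iff_general (n : ℕ) (α β : ℝ)
    (hα1 : α < 1/((n:ℝ)+1))
    (hβ1 : β < 1/((n:ℝ)+1))
    (Φ : Spx (n+1) ≃ₜ Spx (n+1)) (hΦ : IsComfort Φ)
    (hmap : ⇑Φ '' cross n α = cross n β) :
    ∀ (x : Spx (n+1)) (i : Fin (n+1)), x.1 i = α ↔ (Φ x).1 i = β := fun x i =>
  ⟨hΦ.apply_eq_of_apply_eq hmap hα1 hβ1, fun h => by
    simpa using hΦ.symm.apply_eq_of_apply_eq (image_symm_cross_eq hmap) hβ1 hα1 h⟩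

theorem comfort_cross_component_iff (n : ℕ) (hn : 1 ≤ n) (α β : ℝ)
    (hα0 : 0 ≤ α) (hα1 : α < 1/((n:ℝ)+1))
    (hβ0 : 0 ≤ β) (hβ1 : β < 1/((n:ℝ)+1))
    (Φ : Spx (n+1) ≃ₜ Spx (n+1)) (hΦ : IsComfort Φ)
    (hmap : ⇑Φ '' cross n α = cross n β) :
    ∀ (x : Spx (n+1)) (i : Fin (n+1)), x.1 i = α ↔ (Φ x).1 i = β :=
  comfort_cross_component_iff_general n α β hα1 hβ1 Φ hΦ hmap

end
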